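/- Let (X,‖·‖) be a reflexive Banach space with dual (X*,‖·‖_*), let L > 0, σ > 0, N ≥ 1, let {a_{k,i}}_{0≤i<k≤N} and {b_{k,i}}_{0≤i≤k≤N} be real coefficients with b_{0,0} = −1, let u_0 ≤ … ≤ u_N be positive reals, and set v_i = 1/u_{N−i}. Let U and V be defined as follows: U(A_0,…,A_N, B_0,…,B_N) = Σ_{k=0}^{N−1} (u_k/(2L)) ‖A_k − A_{k+1}‖_*² + Σ_{k=0}^{N−1} (σ/2) ‖B_k − B_{k+1}‖² + Σ_{k=0}^{N−1} ⟨Σ_{i=0}^{k} a_{k+1,i} A_i, B_{k+1}⟩ − Σ_{k=0}^{N} u_k ⟨A_k − A_{k+1}, x_k⟩, where A_{N+1} := 0, x_0 := B_0, x_{k+1} := x_k − Σ_{i=0}^{k+1} b_{k+1,i} B_i; and V(C_0,…,C_N, D_0,…,D_N) = Σ_{k=0}^{N−1} (v_{k+1}/(2L)) ‖C_k − C_{k+1}‖_*² + Σ_{k=0}^{N−1} (σ/2) ‖D_k − D_{k+1}‖² + Σ_{k=0}^{N} ⟨Σ_{i=0}^{k} b_{N−i,N−k} C_i, D_k⟩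 + Σ_{k=0}^{N−1} ⟨v_{k+1} C_{k+1} − Σ_{j=0}^{k} (v_{j+1} − v_j) C_j, Σ_{i=0}^{k} a_{N−i,N−1−k} D_i⟩. For any A_0,…,A_N ∈ X* and B_0,…,B_N ∈ X, define C_0,…,C_N ∈ X* and D_0,…,D_N ∈ X by C_0 = u_N A_N, C_{N−i} − C_{N−i−1} = u_i (A_i − A_{i+1}) for i = 0, …, N−1 (with A_{N+1} := 0), and D_i = B_{N−i} for i = 0, …, N. Then U(A_0,…,A_N, B_0,…,B_N) = V(C_0,…,C_N, D_0,…,D_N). -/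

import Mathlib

/-! `D` is `B` read backwards and `C` collects the increments `u_i (A_i - A_{i+1})` backwards, so
`v_{k+1} (C_{k+1} - C_k) = A_{N-k-1} - A_{N-k}`; by summation by parts the weight
`v_{k+1} C_{k+1} - ∑_{j ≤ k} (v_{j+1} - v_j) C_j` of the last term of `V` telescopes to
`A_{N-1-k}`. Reflecting the index triangle `i ≤ k < n` through `(k, i) ↦ (n-1-i, n-1-k)` then
matches the quadratic terms and the `a`-terms of `V` with those of `U` one by one, and a second
summation by parts, using `x_k - x_{k+1} = ∑_i b_{k+1,i} B_i` and `b_{0,0} = -1`, turns the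
`b`-terms of `V` into the `x`-terms of `U`. -/

open NormedSpace Finset

section MirrorDuality

variable (X : Type*) [NormedAddCommGroup X] [NormedSpace ℝ X]

/-- Extension of a tuple indexed by `Fin (N+1)` to `ℕ` by zero; in particular
it implements the convention `A_{N+1} := 0`. -/
def extZ {α : Type*} [Zero α] (N : ℕ) (A : Fin (N + 1) → α) : ℕ → α :=
  fun i => if h : i < N + 1 then A ⟨i, h⟩ else 0

/-- The auxiliary sequence `x_0 = B_0`, `x_{k+1} = x_k - ∑_{i=0}^{k+1} b_{k+1,i} B_i`
appearing in the definition of the primal residual functional `U`. -/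
noncomputable def xAux (b : ℕ → ℕ → ℝ) (B : ℕ → X) : ℕ → X :=
  fun k => B 0 - ∑ j ∈ range k, ∑ i ∈ range (j + 2), b (j + 1) i • B i

/-- The primal residual functional
`U(A,B) = ∑_{k<N} (u_k/(2L))‖A_k-A_{k+1}‖_*² + ∑_{k<N} (σ/2)‖B_k-B_{k+1}‖²
 + ∑_{k<N} ⟨∑_{i≤k} a_{k+1,i}A_i, B_{k+1}⟩ - ∑_{k≤N} u_k ⟨A_k-A_{k+1}, x_k⟩`,
with the convention `A_{N+1} = 0` (only values `A_0,…,A_N`, `B_0,…,B_N` are read). -/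
noncomputable def primalU (N : ℕ) (L σ : ℝ) (u : ℕ → ℝ) (a b : ℕ → ℕ → ℝ)
    (A : ℕ → StrongDual ℝ X) (B : ℕ → X) : ℝ :=
  -- `A` with the convention `A_{N+1} := 0`
  let Az : ℕ → StrongDual ℝ X := fun i => if i ≤ N then A i else 0
  (∑ k ∈ range N, u k / (2 * L) * ‖A k - A (k + 1)‖ ^ 2)
    + (∑ k ∈ range N, σ / 2 * ‖B k - B (k + 1)‖ ^ 2)
    + (∑ k ∈ range N, (∑ i ∈ range (k + 1), a (k + 1) i • A i) (B (k + 1)))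
    - ∑ k ∈ range (N + 1), u k * (Az k - Az (k + 1)) (xAux X b B k)

/-- The dual residual functional
`V(C,D) = ∑_{k<N} (v_{k+1}/(2L))‖C_k-C_{k+1}‖_*² + ∑_{k<N} (σ/2)‖D_k-D_{k+1}‖²
 + ∑_{k≤N} ⟨∑_{i≤k} b_{N-i,N-k}C_i, D_k⟩
 + ∑_{k<N} ⟨v_{k+1}C_{k+1} - ∑_{j≤k}(v_{j+1}-v_j)C_j, ∑_{i≤k} a_{N-i,N-1-k}D_i⟩`. -/
noncomputable def dualV (N : ℕ) (L σ : ℝ) (v : ℕ → ℝ) (a b : ℕ → ℕ → ℝ)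
    (C : ℕ → StrongDual ℝ X) (D : ℕ → X) : ℝ :=
  (∑ k ∈ range N, v (k + 1) / (2 * L) * ‖C k - C (k + 1)‖ ^ 2)
    + (∑ k ∈ range N, σ / 2 * ‖D k - D (k + 1)‖ ^ 2)
    + (∑ k ∈ range (N + 1), (∑ i ∈ range (k + 1), b (N - i) (N - k) • C i) (D k))
    + ∑ k ∈ range N,
        (v (k + 1) • C (k + 1) - ∑ j ∈ range (k + 1), (v (j + 1) - v j) • C j)
          (∑ i ∈ range (k + 1), a (N - i) (N - 1 - k) • D i)

section

variable {X}

theorem sum_range_sum_range_succ_reflect {M : Type*} [AddCommMonoid M] (n : ℕ)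
    (f : ℕ → ℕ → M) :
    ∑ k ∈ range n, ∑ i ∈ range (k + 1), f k i
      = ∑ k ∈ range n, ∑ i ∈ range (k + 1), f (n - 1 - i) (n - 1 - k) := by
  rw [sum_sigma', sum_sigma']
  refine sum_nbij' (fun p ↦ ⟨n - 1 - p.2, n - 1 - p.1⟩) (fun p ↦ ⟨n - 1 - p.2, n - 1 - p.1⟩)
    ?_ ?_ ?_ ?_ ?_ <;> rintro ⟨k, i⟩ h <;> simp only [mem_sigma, mem_range] at h ⊢
  · omega
  · omega
  all_goals
    obtain ⟨hk, hi⟩ : n - 1 - (n - 1 - k) = k ∧ n - 1 - (n - 1 - i) = i := by omega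
    simp only [hk, hi]

theorem smul_sub_sum_range_sub_smul {R M : Type*} [Ring R] [AddCommGroup M] [Module R M]
    (v : ℕ → R) (c : ℕ → M) (n : ℕ) :
    v n • c n - ∑ j ∈ range n, (v (j + 1) - v j) • c j
      = v 0 • c 0 + ∑ j ∈ range n, v (j + 1) • (c (j + 1) - c j) := by
  induction n with
  | zero => simp
  | succ n ih =>
    rw [sum_range_succ, sum_range_succ, ← add_assoc, ← ih]
    simp only [sub_smul, smul_sub]
    abel

theorem xAux_zero (b : ℕ → ℕ → ℝ) (B : ℕ → X) : xAux X b B 0 = B 0 := by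
  simp [xAux]

theorem xAux_sub_xAux_succ (b : ℕ → ℕ → ℝ) (B : ℕ → X) (k : ℕ) :
    xAux X b B k - xAux X b B (k + 1) = ∑ i ∈ range (k + 2), b (k + 1) i • B i := by
  simp only [xAux, sum_range_succ _ k]
  abel

theorem sum_range_succ_apply_eq_neg_sum_sub_apply (G : ℕ → StrongDual ℝ X) (x y : ℕ → X)
    (hy0 : y 0 = -x 0) (hy : ∀ k, y (k + 1) = x k - x (k + 1)) (n : ℕ) :
    ∑ k ∈ range (n + 1), G k (y k)
      = -(∑ k ∈ range n, (G k - G (k + 1)) (x k) + G n (x n)) := by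
  induction n with
  | zero => simp [hy0]
  | succ n ih =>
    rw [sum_range_succ, ih, hy, sum_range_succ]
    simp only [map_sub, sub_apply]
    ring

theorem sum_range_norm_sub_reflect {E : Type*} [SeminormedAddCommGroup E]
    {B D : ℕ → E} (hD : ∀ i ≤ N, D i = B (N - i)) (g : ℝ → ℝ) :
    ∑ k ∈ range N, g ‖D k - D (k + 1)‖ = ∑ k ∈ range N, g ‖B k - B (k + 1)‖ := by
  conv_rhs => rw [← sum_range_reflect]
  refine sum_congr rfl fun k hk ↦ ?_
  have hk : k < N := by simpa using hk
  obtain ⟨h₁, h₂⟩ : N - (k + 1) = N - 1 - k ∧ N - 1 - k + 1 = N - k := by omega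
  rw [hD k hk.le, hD (k + 1) hk, h₁, norm_sub_rev, h₂]

variable {N : ℕ} {u v : ℕ → ℝ} {A C : ℕ → StrongDual ℝ X}

theorem mirror_succ_sub
    (hCrec : ∀ i < N,
      C (N - i) - C (N - i - 1) = u i • (A i - (if i + 1 ≤ N then A (i + 1) else 0)))
    {k : ℕ} (hk : k < N) :
    C (k + 1) - C k = u (N - (k + 1)) • (A (N - (k + 1)) - A (N - k)) := by
  have h := hCrec (N - (k + 1)) (by omega)
  obtain ⟨h₁, h₂⟩ : N - (N - (k + 1)) = k + 1 ∧ N - (k + 1) + 1 = N - k := by omega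
  rwa [h₁, Nat.add_sub_cancel, h₂, if_pos (by omega)] at h

theorem mirror_smul_succ_sub (hu : ∀ i ≤ N, u i ≠ 0) (hv : ∀ i ≤ N, v i = 1 / u (N - i))
    (hC : ∀ k < N, C (k + 1) - C k = u (N - (k + 1)) • (A (N - (k + 1)) - A (N - k)))
    {k : ℕ} (hk : k < N) :
    v (k + 1) • (C (k + 1) - C k) = A (N - (k + 1)) - A (N - k) := by
  rw [hC k hk, smul_smul, hv (k + 1) hk, one_div_mul_cancel (hu _ (by omega)), one_smul]

theorem mirror_smul_sub_sum (hu : ∀ i ≤ N, u i ≠ 0) (hv : ∀ i ≤ N, v i = 1 / u (N - i))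
    (hC0 : C 0 = u N • A N)
    (hC : ∀ k < N, C (k + 1) - C k = u (N - (k + 1)) • (A (N - (k + 1)) - A (N - k)))
    {k : ℕ} (hk : k < N) :
    v (k + 1) • C (k + 1) - ∑ j ∈ range (k + 1), (v (j + 1) - v j) • C j = A (N - (k + 1)) := by
  have hsum : ∑ j ∈ range (k + 1), v (j + 1) • (C (j + 1) - C j)
      = ∑ j ∈ range (k + 1), (A (N - (j + 1)) - A (N - j)) :=
    sum_congr rfl fun j hj ↦ mirror_smul_succ_sub hu hv hC (by simp at hj; omega)
  rw [smul_sub_sum_range_sub_smul v C (k + 1), hsum, sum_range_sub (fun j ↦ A (N - j)), hC0,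
    smul_smul, hv 0 (Nat.zero_le N), Nat.sub_zero, one_div_mul_cancel (hu N le_rfl), one_smul]
  abel

theorem mirror_sum_norm_sq (hu : ∀ i ≤ N, u i ≠ 0) (hv : ∀ i ≤ N, v i = 1 / u (N - i))
    (hC : ∀ k < N, C (k + 1) - C k = u (N - (k + 1)) • (A (N - (k + 1)) - A (N - k))) (c : ℝ) :
    ∑ k ∈ range N, v (k + 1) / c * ‖C k - C (k + 1)‖ ^ 2
      = ∑ k ∈ range N, u k / c * ‖A k - A (k + 1)‖ ^ 2 := by
  conv_rhs => rw [← sum_range_reflect]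
  refine sum_congr rfl fun k hk ↦ ?_
  have hk : k < N := by simpa using hk
  obtain ⟨h₁, h₂⟩ : N - 1 - k = N - (k + 1) ∧ N - (k + 1) + 1 = N - k := by omega
  have hu' := hu (N - (k + 1)) (by omega)
  rw [h₁, h₂, norm_sub_rev, hC k hk, norm_smul, Real.norm_eq_abs, mul_pow, sq_abs,
    hv (k + 1) hk]
  field_simp

theorem mirror_sum_a_terms (a : ℕ → ℕ → ℝ) {B D : ℕ → X} (hu : ∀ i ≤ N, u i ≠ 0)
    (hv : ∀ i ≤ N, v i = 1 / u (N - i)) (hC0 : C 0 = u N • A N)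
    (hC : ∀ k < N, C (k + 1) - C k = u (N - (k + 1)) • (A (N - (k + 1)) - A (N - k)))
    (hD : ∀ i ≤ N, D i = B (N - i)) :
    ∑ k ∈ range N, (v (k + 1) • C (k + 1) - ∑ j ∈ range (k + 1), (v (j + 1) - v j) • C j)
        (∑ i ∈ range (k + 1), a (N - i) (N - 1 - k) • D i)
      = ∑ k ∈ range N, (∑ i ∈ range (k + 1), a (k + 1) i • A i) (B (k + 1)) := by
  simp only [_root_.sum_apply, smul_apply, smul_eq_mul]
  rw [sum_range_sum_range_succ_reflect N]
  refine sum_congr rfl fun k hk ↦ ?_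
  have hk : k < N := by simpa using hk
  rw [mirror_smul_sub_sum hu hv hC0 hC hk, map_sum]
  refine sum_congr rfl fun i hi ↦ ?_
  have hi : i < k + 1 := by simpa using hi
  obtain ⟨h₁, h₂⟩ : N - 1 - i + 1 = N - i ∧ N - (k + 1) = N - 1 - k := by omega
  rw [h₁, h₂, hD i (by omega), map_smul, smul_eq_mul]

theorem mirror_sum_b_terms (b : ℕ → ℕ → ℝ) {B D : ℕ → X} (hb00 : b 0 0 = -1)
    (hC0 : C 0 = u N • A N)
    (hCrec : ∀ i < N,
      C (N - i) - C (N - i - 1) = u i • (A i - (if i + 1 ≤ N then A (i + 1) else 0)))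
    (hD : ∀ i ≤ N, D i = B (N - i)) :
    ∑ k ∈ range (N + 1), (∑ i ∈ range (k + 1), b (N - i) (N - k) • C i) (D k)
      = -∑ k ∈ range (N + 1), u k * ((if k ≤ N then A k else 0)
          - (if k + 1 ≤ N then A (k + 1) else 0)) (xAux X b B k) := by
  have hreflect : ∑ k ∈ range (N + 1), (∑ i ∈ range (k + 1), b (N - i) (N - k) • C i) (D k)
      = ∑ k ∈ range (N + 1), C (N - k) (∑ i ∈ range (k + 1), b k i • B i) := by
    simp only [_root_.sum_apply, smul_apply, smul_eq_mul, map_sum, map_smul]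
    rw [sum_range_sum_range_succ_reflect (N + 1), Nat.add_sub_cancel]
    refine sum_congr rfl fun k hk ↦ sum_congr rfl fun i hi ↦ ?_
    have hk : k < N + 1 := by simpa using hk
    have hi : i < k + 1 := by simpa using hi
    obtain ⟨h₁, h₂⟩ : N - (N - k) = k ∧ N - (N - i) = i := by omega
    rw [h₁, h₂, hD _ (by omega), h₂]
  have hx0 : ∑ i ∈ range (0 + 1), b 0 i • B i = -xAux X b B 0 := by
    simp [hb00, xAux_zero]
  have hx : ∀ k, ∑ i ∈ range (k + 1 + 1), b (k + 1) i • B i = xAux X b B k - xAux X b B (k + 1) :=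
    fun k ↦ (xAux_sub_xAux_succ b B k).symm
  rw [hreflect, sum_range_succ_apply_eq_neg_sum_sub_apply (fun k ↦ C (N - k)) _ _ hx0 hx N,
    sum_range_succ, Nat.sub_self, hC0, if_pos le_rfl, if_neg (by omega), sub_zero]
  congr 2
  refine sum_congr rfl fun k hk ↦ ?_
  have hk : k < N := by simpa using hk
  rw [if_pos hk.le, ← Nat.sub_sub, hCrec k hk, smul_apply, smul_eq_mul]

end

theorem mirror_duality_key_identity
    (L σ : ℝ)
    (N : ℕ)
    (a b : ℕ → ℕ → ℝ) (hb00 : b 0 0 = -1)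
    (u v : ℕ → ℝ)
    (hu_pos : ∀ i ≤ N, 0 < u i)
    (hv : ∀ i ≤ N, v i = 1 / u (N - i))
    (A C : ℕ → StrongDual ℝ X) (B D : ℕ → X)
    (hC0 : C 0 = u N • A N)
    (hCrec : ∀ i < N,
      C (N - i) - C (N - i - 1) =
        u i • (A i - (if i + 1 ≤ N then A (i + 1) else 0)))
    (hD : ∀ i ≤ N, D i = B (N - i)) :
    primalU X N L σ u a b A B = dualV X N L σ v a b C D := by
  have hu : ∀ i ≤ N, u i ≠ 0 := fun i hi ↦ (hu_pos i hi).ne'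
  have hC : ∀ k < N, C (k + 1) - C k = u (N - (k + 1)) • (A (N - (k + 1)) - A (N - k)) :=
    fun k hk ↦ mirror_succ_sub hCrec hk
  simp only [primalU, dualV]
  rw [mirror_sum_norm_sq hu hv hC, sum_range_norm_sub_reflect hD (fun t ↦ σ / 2 * t ^ 2),
    mirror_sum_b_terms b hb00 hC0 hCrec hD, mirror_sum_a_terms a hu hv hC0 hC hD]
  ring

end MirrorDuality
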